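/- arXiv:2501.10173 — 12 statements merged into one kernel-verified Lean document; each statement's English description precedes it below -/
import Mathlib

section
/- Let λ₀ ≥ 1 be a natural number, ν ≥ 1 a natural number, and define λ_k = λ₀ + kν. For every λ̂ ≥ λ₀, the loss L⁺(λ̂) = ∑_{k=0}^{k̂(λ̂)} λ_k − λ̂, where k̂(λ̂) = min{k : λ_k ≥ λ̂}, satisfies L⁺(λ̂) ≥ (1/2)(λ̂ − λ₀)((λ̂ + λ₀)/ν − 1). -/
/-- Lower bound for the loss of the additive restart strategy `R⁺`. -/
theorem stmt2 (lam0 nu : ℕ) (h0 : 1 ≤ lam0) (hnu : 1 ≤ nu)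
    (lam : ℕ → ℕ) (hlam : ∀ k, lam k = lam0 + k * nu)
    (khat : ℕ → ℕ) (hkhat : ∀ l, khat l = sInf {k | l ≤ lam k})
    (L : ℕ → ℝ) (hL : ∀ l, L l = (∑ k ∈ Finset.range (khat l + 1), (lam k : ℝ)) - l)
    (lhat : ℕ) (hlhat : lam0 ≤ lhat) :
    L lhat ≥ (1 / 2) * ((lhat : ℝ) - lam0) * (((lhat : ℝ) + lam0) / nu - 1) := by
  set K := khat lhat with hK
  have hmem : lhat ≤ lam K := by
    have hne : {k | lhat ≤ lam k}.Nonempty := by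
      refine ⟨lhat, ?_⟩
      simp only [Set.mem_setOf_eq, hlam]
      calc lhat = lhat * 1 := (mul_one _).symm
        _ ≤ lhat * nu := Nat.mul_le_mul_left _ hnu
        _ ≤ lam0 + lhat * nu := Nat.le_add_left _ _
    have := Nat.sInf_mem hne
    rw [hK, hkhat]
    exact this
  have hKnu : ((lhat : ℝ) - lam0) ≤ (nu : ℝ) * K := by
    rw [hlam] at hmem
    have : (lhat : ℝ) ≤ lam0 + K * nu := by exact_mod_cast hmem
    linarith
  have hsum : (∑ k ∈ Finset.range (K + 1), (lam k : ℝ))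
      = (K + 1) * lam0 + nu * (K * (K + 1) / 2) := by
    have : ∀ k, (lam k : ℝ) = lam0 + k * nu := by
      intro k; rw [hlam]; push_cast; ring
    simp only [this, Finset.sum_add_distrib, Finset.sum_const, Finset.card_range,
      ← Finset.sum_mul]
    have hg : (∑ k ∈ Finset.range (K + 1), (k : ℝ)) = K * (K + 1) / 2 := by
      induction K with
      | zero => simp
      | succ n ih =>
        rw [Finset.sum_range_succ, ih]
        push_cast; ring
    rw [hg]; push_cast; ring
  rw [hL, hsum]
  have hnu' : (1 : ℝ) ≤ nu := by exact_mod_cast hnu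
  have h0' : (1 : ℝ) ≤ lam0 := by exact_mod_cast h0
  have hl' : (lam0 : ℝ) ≤ lhat := by exact_mod_cast hlhat
  have hnupos : (0 : ℝ) < nu := by linarith
  rw [ge_iff_le, div_sub' (ne_of_gt hnupos), ← mul_div_assoc,
    div_le_iff₀ hnupos]
  nlinarith [mul_nonneg (sub_nonneg.2 hKnu) (show (0:ℝ) ≤ (nu:ℝ)*K + ((lhat:ℝ)-lam0) + 2*lam0 + nu by nlinarith), sq_nonneg ((nu:ℝ)*K - ((lhat:ℝ)-lam0))]
end

section
/- Let λ₀ ≥ 1, ν ≥ 1 be natural numbers and λ_k = λ₀ + kν. For every λ̂ ≥ λ₀, the loss L⁺(λ̂) = ∑_{k=0}^{k̂(λ̂)} λ_k − λ̂ satisfies L⁺(λ̂) ≤ (1/2)(λ̂ − λ₀ − 1)((λ̂ + λ₀ − 1)/ν + 1) + λ₀ + ν − 1. -/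
/-- Upper bound for the loss of the additive restart strategy `R⁺`. -/
theorem stmt3 (lam0 nu : ℕ) (h0 : 1 ≤ lam0) (hnu : 1 ≤ nu)
    (lam : ℕ → ℕ) (hlam : ∀ k, lam k = lam0 + k * nu)
    (khat : ℕ → ℕ) (hkhat : ∀ l, khat l = sInf {k | l ≤ lam k})
    (L : ℕ → ℝ) (hL : ∀ l, L l = (∑ k ∈ Finset.range (khat l + 1), (lam k : ℝ)) - l)
    (lhat : ℕ) (hlhat : lam0 ≤ lhat) :
    L lhat ≤ (1 / 2) * ((lhat : ℝ) - lam0 - 1) * (((lhat : ℝ) + lam0 - 1) / nu + 1)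
      + lam0 + nu - 1 := by
  have hν : (0:ℝ) < nu := by exact_mod_cast hnu
  have hν1 : (1:ℝ) ≤ nu := by exact_mod_cast hnu
  have hl01 : (1:ℝ) ≤ lam0 := by exact_mod_cast h0
  have hlh : (lam0:ℝ) ≤ lhat := by exact_mod_cast hlhat
  set K := khat lhat with hK
  -- key fact F : K * nu ≤ lhat - lam0 - 1 + nu  (in ℝ)
  have hF : (K:ℝ) * nu ≤ (lhat:ℝ) - lam0 - 1 + nu := by
    rcases Nat.eq_zero_or_pos K with h | h
    · rw [h]; push_cast; nlinarith
    · obtain ⟨k, hk1⟩ : ∃ k, K = k + 1 := ⟨K - 1, (Nat.succ_pred_eq_of_pos h).symm⟩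
      have hk : k ∉ {j | lhat ≤ lam j} := by
        apply Nat.notMem_of_lt_sInf
        rw [← hkhat]; omega
      simp only [Set.mem_setOf_eq, hlam, not_le] at hk
      have h2 : (lam0:ℝ) + k * nu + 1 ≤ lhat := by exact_mod_cast hk
      rw [hk1]
      push_cast
      nlinarith
  -- sum formula
  have hsum : (∑ k ∈ Finset.range (K + 1), (lam k : ℝ))
      = (K + 1) * lam0 + nu * (K * (K + 1) / 2) := by
    have hg : (∑ i ∈ Finset.range (K + 1), (i:ℝ)) = K * (K + 1) / 2 := by
      have h2 : (∑ i ∈ Finset.range (K + 1), i) * 2 = (K + 1) * K := by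
        rw [Finset.sum_range_id_mul_two]; simp
      have h3 := congrArg (Nat.cast : ℕ → ℝ) h2
      push_cast at h3
      linarith
    simp only [hlam]
    push_cast
    rw [Finset.sum_add_distrib, Finset.sum_const, ← Finset.sum_mul, hg]
    simp [Finset.card_range]
    ring
  have hrhs : (1 / 2) * ((lhat : ℝ) - lam0 - 1) * (((lhat : ℝ) + lam0 - 1) / nu + 1)
      + lam0 + nu - 1
      = (((lhat:ℝ) - lam0 - 1) * (((lhat:ℝ) + lam0 - 1) + nu)
          + 2 * nu * ((lam0:ℝ) + nu - 1)) / (2 * nu) := by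
    field_simp
    ring
  rw [hL, hsum, hrhs, le_div_iff₀ (by positivity)]
  have hKnn : (0:ℝ) ≤ (K:ℝ) * nu := by positivity
  have hMnn : (0:ℝ) ≤ (lhat:ℝ) - lam0 - 1 + nu := by nlinarith
  nlinarith [mul_nonneg (sub_nonneg.mpr hF) (by nlinarith : (0:ℝ) ≤ (lhat:ℝ) - lam0 - 1 + nu + K*nu),
    mul_nonneg (sub_nonneg.mpr hF) (le_of_lt hν),
    mul_nonneg (sub_nonneg.mpr hF) (by nlinarith : (0:ℝ) ≤ (lam0:ℝ))]
end

section
/- For the additive restart strategy, the relative loss ℓ⁺(λ̂, ν) = L⁺(λ̂, ν)/λ̂ is unbounded: for every fixed ν ≥ 1 and λ₀ ≥ 1, ℓ⁺(λ̂, ν) → ∞ as λ̂ → ∞. In particular, the lower bound (1/2)(1 − λ₀/λ̂)((λ̂ + λ₀)/ν − 1) tends to infinity as λ̂ → ∞. -/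
open Filter

/-- The relative loss of the additive restart strategy `R⁺` is unbounded: it tends to
infinity as `λ̂ → ∞`; in particular its lower bound tends to infinity. -/
theorem stmt4 (lam0 nu : ℕ) (h0 : 1 ≤ lam0) (hnu : 1 ≤ nu)
    (lam : ℕ → ℕ) (hlam : ∀ k, lam k = lam0 + k * nu)
    (khat : ℕ → ℕ) (hkhat : ∀ l, khat l = sInf {k | l ≤ lam k})
    (L : ℕ → ℝ) (hL : ∀ l, L l = (∑ k ∈ Finset.range (khat l + 1), (lam k : ℝ)) - l) :
    Tendsto (fun lhat : ℕ => L lhat / lhat) atTop atTop ∧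
    Tendsto (fun lhat : ℕ =>
        (1 / 2) * (1 - (lam0 : ℝ) / lhat) * (((lhat : ℝ) + lam0) / nu - 1)) atTop atTop := by
  have hnuR : (0 : ℝ) < nu := by exact_mod_cast Nat.lt_of_lt_of_le Nat.zero_lt_one hnu
  have hNat : Tendsto (fun l : ℕ => (l : ℝ)) atTop atTop := tendsto_natCast_atTop_atTop
  constructor
  · -- first part
    have hg : Tendsto (fun l : ℕ => ((l : ℝ) - 2 * lam0) / (2 * nu) - 1) atTop atTop := by
      have h1 : Tendsto (fun l : ℕ => (l : ℝ) - 2 * lam0) atTop atTop :=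
        tendsto_atTop_add_const_right _ (-(2 * (lam0 : ℝ))) hNat |>.congr (by
          intro l; ring)
      have h2 : Tendsto (fun l : ℕ => ((l : ℝ) - 2 * lam0) / (2 * nu)) atTop atTop :=
        h1.atTop_div_const (by positivity)
      exact tendsto_atTop_add_const_right _ (-1 : ℝ) h2
    refine tendsto_atTop_mono' atTop ?_ hg
    filter_upwards [eventually_ge_atTop (lam0 + 1)] with l hl
    set K := khat l with hK
    have hmem : l ≤ lam K := by
      rw [hK, hkhat]
      have hne : l ∈ {k | l ≤ lam k} := by
        simp only [Set.mem_setOf_eq, hlam]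
        calc l = l * 1 := (mul_one l).symm
          _ ≤ l * nu := Nat.mul_le_mul_left l hnu
          _ ≤ lam0 + l * nu := Nat.le_add_left _ _
      exact Nat.sInf_mem ⟨l, hne⟩
    have h1R : (l : ℝ) ≤ lam0 + K * nu := by
      rw [hlam] at hmem; exact_mod_cast hmem
    have hSum : (∑ k ∈ Finset.range (K + 1), (lam k : ℝ)) =
        (K + 1) * lam0 + (∑ k ∈ Finset.range (K + 1), (k : ℝ)) * nu := by
      simp only [hlam]
      push_cast
      rw [Finset.sum_add_distrib, Finset.sum_const, ← Finset.sum_mul]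
      simp [mul_comm]
    have hGauss : (∑ k ∈ Finset.range (K + 1), (k : ℝ)) * 2 = (K + 1) * K := by
      have h := congrArg (fun n : ℕ => (n : ℝ)) (Finset.sum_range_id_mul_two (K + 1))
      push_cast [Nat.add_sub_cancel] at h
      linarith [h]
    have hlpos : (0 : ℝ) < l := by
      have : 1 ≤ l := le_trans (Nat.le_add_left 1 lam0) hl
      exact_mod_cast Nat.lt_of_lt_of_le Nat.zero_lt_one this
    have hl0R : (lam0 : ℝ) ≤ l := by exact_mod_cast le_trans (Nat.le_succ lam0) hl
    rw [le_div_iff₀ hlpos, hL]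
    have hKnn : (0 : ℝ) ≤ (K : ℝ) := Nat.cast_nonneg K
    have hsq : ((l : ℝ) - lam0) * ((l : ℝ) - lam0) ≤ ((nu : ℝ) * K) * ((nu : ℝ) * K) :=
      mul_self_le_mul_self (by linarith) (by linarith)
    have h2nu : (0 : ℝ) < 2 * nu := by positivity
    have hTnu : (∑ k ∈ Finset.range (K + 1), (k : ℝ)) * (2 * (nu * nu)) =
        ((K : ℝ) + 1) * K * (nu * nu) := by
      have := congrArg (· * ((nu : ℝ) * nu)) hGauss
      simpa [mul_assoc, mul_comm, mul_left_comm] using this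
    have hmain : ((l : ℝ) - 2 * lam0) * l ≤
        (∑ k ∈ Finset.range (K + 1), (lam k : ℝ)) * (2 * nu) := by
      rw [hSum]
      nlinarith [mul_nonneg (mul_nonneg hnuR.le hKnn) (Nat.cast_nonneg lam0 : (0:ℝ) ≤ lam0),
        mul_nonneg hnuR.le (Nat.cast_nonneg lam0 : (0:ℝ) ≤ lam0), sq_nonneg ((lam0 : ℝ)),
        mul_nonneg (mul_nonneg hnuR.le hnuR.le) hKnn]
    calc (((l : ℝ) - 2 * lam0) / (2 * nu) - 1) * l
        = (((l : ℝ) - 2 * lam0) * l) / (2 * nu) - l := by ring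
      _ ≤ (∑ k ∈ Finset.range (K + 1), (lam k : ℝ)) - l := by
          have := (div_le_iff₀ h2nu).2 hmain
          linarith
  · -- second part
    have ha : Tendsto (fun l : ℕ => (1 / 2 : ℝ) * (1 - (lam0 : ℝ) / l)) atTop
        (nhds ((1 / 2 : ℝ) * (1 - 0))) :=
      (tendsto_const_nhds.sub (tendsto_const_div_atTop_nhds_zero_nat (lam0 : ℝ))).const_mul _
    have hb : Tendsto (fun l : ℕ => ((l : ℝ) + lam0) / nu - 1) atTop atTop := by
      have h1 : Tendsto (fun l : ℕ => (l : ℝ) + lam0) atTop atTop :=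
        tendsto_atTop_add_const_right _ ((lam0 : ℝ)) hNat
      exact tendsto_atTop_add_const_right _ (-1 : ℝ)
        (h1.atTop_div_const hnuR) |>.congr (by intro l; ring)
    exact Tendsto.pos_mul_atTop (by norm_num) ha hb
end

section
/- Let ρ > 1, λ₀ ≥ 1 and λ_k = ⌈λ₀ ρ^k⌉. Then the loss function L^×(λ̂, ρ) = ∑_{k=0}^{k̂(λ̂)} λ_k − λ̂, where k̂(λ̂) = min{k : λ_k ≥ λ̂}, satisfies for all λ̂ ≥ λ₀: L^×(λ̂, ρ) < λ̂(ρ + 1/(ρ−1)) − λ₀/(ρ−1) + ln(λ̂/λ₀)/ln(ρ). -/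
/-- Upper bound for the loss of the `R^×` restart strategy. -/
theorem stmt7 (rho : ℝ) (hrho : 1 < rho) (lam0 : ℕ) (h0 : 1 ≤ lam0)
    (lam : ℕ → ℤ) (hlam : ∀ k, lam k = ⌈(lam0 : ℝ) * rho ^ k⌉)
    (khat : ℤ → ℕ) (hkhat : ∀ l, khat l = sInf {k | l ≤ lam k})
    (L : ℤ → ℝ) (hL : ∀ l, L l = (∑ k ∈ Finset.range (khat l + 1), (lam k : ℝ)) - l)
    (lhat : ℤ) (hlhat : (lam0 : ℤ) ≤ lhat) :
    L lhat < (lhat : ℝ) * (rho + 1 / (rho - 1)) - (lam0 : ℝ) / (rho - 1)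
      + Real.log ((lhat : ℝ) / lam0) / Real.log rho := by
  have hr1 : (0:ℝ) < rho - 1 := by linarith
  have ha : (1:ℝ) ≤ (lam0:ℝ) := by exact_mod_cast h0
  have ha0 : (0:ℝ) < (lam0:ℝ) := by linarith
  have hl : (lam0:ℝ) ≤ (lhat:ℝ) := by exact_mod_cast hlhat
  have hl1 : (1:ℝ) ≤ (lhat:ℝ) := le_trans ha hl
  -- log term nonneg
  have hlogpos : 0 < Real.log rho := Real.log_pos hrho
  have hGnn : 0 ≤ Real.log ((lhat:ℝ)/lam0) / Real.log rho :=
    div_nonneg (Real.log_nonneg (by rw [le_div_iff₀ ha0]; linarith)) hlogpos.le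
  -- nonemptiness of the set
  have hne : {k | lhat ≤ lam k}.Nonempty := by
    obtain ⟨n, hn⟩ := pow_unbounded_of_one_lt (lhat:ℝ) hrho
    refine ⟨n, ?_⟩
    have hp : (0:ℝ) < rho ^ n := pow_pos (by linarith) n
    have h1 : (lhat:ℝ) ≤ (lam0:ℝ) * rho ^ n := by nlinarith
    have h2 : (lhat:ℝ) ≤ ((lam n : ℤ) : ℝ) := by
      rw [hlam]; exact h1.trans (Int.le_ceil _)
    exact_mod_cast h2
  have hmem : lhat ≤ lam (khat lhat) := by
    have := Nat.sInf_mem hne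
    rw [hkhat]; exact this
  have hltk : ∀ k, k < khat lhat → lam k < lhat := by
    intro k hk
    rw [hkhat] at hk
    by_contra h
    push_neg at h
    exact absurd (Nat.sInf_le h) (not_le.mpr hk)
  -- sum bound
  have hsum : ∀ n : ℕ, (∑ k ∈ Finset.range n, (lam k : ℝ)) ≤
      (lam0:ℝ) * ((rho ^ n - 1)/(rho - 1)) + n := by
    intro n
    have h1 : (∑ k ∈ Finset.range n, (lam k : ℝ)) ≤
        ∑ k ∈ Finset.range n, ((lam0:ℝ) * rho ^ k + 1) := by
      refine Finset.sum_le_sum fun k _ => ?_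
      rw [hlam]
      exact (Int.ceil_lt_add_one _).le
    have h2 : ∑ k ∈ Finset.range n, ((lam0:ℝ) * rho ^ k + 1)
        = (lam0:ℝ) * ((rho ^ n - 1)/(rho - 1)) + n := by
      rw [Finset.sum_add_distrib, ← Finset.mul_sum, geom_sum_eq hrho.ne']
      simp
    linarith [h1, h2.le]
  rcases Nat.eq_zero_or_pos (khat lhat) with hK0 | hKpos
  · -- khat = 0
    have hlam00 : (lam 0 : ℝ) = (lam0:ℝ) := by
      rw [hlam]; push_cast; simp
    have hLval : L lhat = (lam0:ℝ) - lhat := by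
      rw [hL, hK0]; simp [hlam00]
    rw [hLval]
    have key : (lhat:ℝ) * (rho + 1/(rho-1)) - (lam0:ℝ)/(rho-1)
        = (lhat:ℝ) * rho + ((lhat:ℝ) - lam0)/(rho-1) := by
      field_simp; ring
    have h3 : 0 ≤ ((lhat:ℝ) - lam0)/(rho-1) := div_nonneg (by linarith) hr1.le
    nlinarith [mul_lt_mul_of_pos_left hrho (lt_of_lt_of_le one_pos hl1)]
  · -- khat ≥ 1
    obtain ⟨K, hK⟩ := Nat.exists_eq_succ_of_ne_zero hKpos.ne'
    have h2 : lam K < lhat := hltk K (by omega)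
    have f2 : (lam0:ℝ) * rho ^ K ≤ (lhat:ℝ) - 1 := by
      have hle := Int.le_ceil ((lam0:ℝ) * rho ^ K)
      rw [← hlam K] at hle
      have h3 : ((lam K : ℤ) : ℝ) ≤ (lhat:ℝ) - 1 := by
        have h4 : lam K ≤ lhat - 1 := by omega
        have h5 : ((lam K : ℤ) : ℝ) ≤ ((lhat - 1 : ℤ) : ℝ) := by exact_mod_cast h4
        push_cast at h5; linarith
      linarith
    have hlt' : rho ^ K < (lhat:ℝ)/lam0 := by
      rw [lt_div_iff₀ ha0]
      nlinarith [pow_pos (lt_trans one_pos hrho) K]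
    have f3 : (K:ℝ) < Real.log ((lhat:ℝ)/lam0) / Real.log rho := by
      rw [lt_div_iff₀ hlogpos]
      have hloglt := Real.log_lt_log (pow_pos (by linarith : (0:ℝ) < rho) K) hlt'
      rwa [Real.log_pow] at hloglt
    -- main computation
    rw [hL, hK]
    have f1 := hsum (K + 2)
    have epow : rho ^ (K + 2) = rho ^ K * rho ^ 2 := by ring
    rw [epow] at f1
    rw [← mul_lt_mul_iff_of_pos_right hr1]
    set S := ∑ k ∈ Finset.range (K + 1 + 1), (lam k : ℝ) with hS
    set G := Real.log ((lhat:ℝ)/lam0) / Real.log rho with hG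
    have f1' : S * (rho - 1) ≤ (lam0:ℝ) * (rho ^ K * rho ^ 2 - 1) + ((K:ℝ) + 2) * (rho - 1) := by
      have := mul_le_mul_of_nonneg_right f1 hr1.le
      have e : ((lam0:ℝ) * ((rho ^ K * rho ^ 2 - 1)/(rho - 1)) + ((K:ℝ) + 2)) * (rho - 1)
          = (lam0:ℝ) * (rho ^ K * rho ^ 2 - 1) + ((K:ℝ) + 2) * (rho - 1) := by
        field_simp
      push_cast at this
      linarith [this, e.le, e.ge]
    have eB : ((lhat:ℝ) * (rho + 1/(rho-1)) - (lam0:ℝ)/(rho-1) + G) * (rho - 1)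
        = (lhat:ℝ) * rho * (rho - 1) + (lhat:ℝ) - (lam0:ℝ) + G * (rho - 1) := by
      field_simp
    rw [eB]
    have hf2r : (lam0:ℝ) * rho ^ K * rho ^ 2 ≤ ((lhat:ℝ) - 1) * rho ^ 2 :=
      mul_le_mul_of_nonneg_right f2 (sq_nonneg rho)
    have hf3r : (K:ℝ) * (rho - 1) ≤ G * (rho - 1) :=
      mul_le_mul_of_nonneg_right f3.le hr1.le
    nlinarith [f1', hf2r, hf3r, sq_nonneg (rho - 1)]
end

section
/- Let ρ > 1, λ₀ ≥ 1 and λ_k = ⌈λ₀ ρ^k⌉. Then the loss L^×(λ̂, ρ) = ∑_{k=0}^{k̂(λ̂)} λ_k − λ̂ satisfies for all λ̂ ≥ λ₀: L^×(λ̂, ρ) > (λ̂ − 1 − λ₀)/(ρ − 1). -/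
/-- Lower bound for the loss of the `R^×` restart strategy. -/
theorem stmt8 (rho : ℝ) (hrho : 1 < rho) (lam0 : ℕ) (h0 : 1 ≤ lam0)
    (lam : ℕ → ℤ) (hlam : ∀ k, lam k = ⌈(lam0 : ℝ) * rho ^ k⌉)
    (khat : ℤ → ℕ) (hkhat : ∀ l, khat l = sInf {k | l ≤ lam k})
    (L : ℤ → ℝ) (hL : ∀ l, L l = (∑ k ∈ Finset.range (khat l + 1), (lam k : ℝ)) - l)
    (lhat : ℤ) (hlhat : (lam0 : ℤ) ≤ lhat) :
    L lhat > ((lhat : ℝ) - 1 - lam0) / (rho - 1) := by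
  have hr0 : (0:ℝ) < rho - 1 := by linarith
  have h1lam0 : (1:ℝ) ≤ (lam0:ℝ) := by exact_mod_cast h0
  have hlow : ∀ k, (lam0:ℝ) * rho ^ k ≤ (lam k : ℝ) := by
    intro k; rw [hlam]; exact Int.le_ceil _
  have hne : {k | lhat ≤ lam k}.Nonempty := by
    obtain ⟨n, hn⟩ := pow_unbounded_of_one_lt (lhat:ℝ) hrho
    refine ⟨n, ?_⟩
    have hp : (0:ℝ) < rho ^ n := pow_pos (lt_trans one_pos hrho) n
    have h1 : (lhat:ℝ) ≤ (lam0:ℝ) * rho ^ n := by nlinarith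
    have := h1.trans (hlow n)
    exact_mod_cast this
  have hmem : lhat ≤ lam (khat lhat) := by
    have := Nat.sInf_mem hne
    rw [← hkhat lhat] at this
    exact this
  set K := khat lhat with hK
  have hlk : (lhat:ℝ) ≤ (lam K : ℝ) := by exact_mod_cast hmem
  have hceil : (lam K : ℝ) < (lam0:ℝ) * rho ^ K + 1 := by
    rw [hlam]; exact Int.ceil_lt_add_one _
  have hsumlow : (lam0:ℝ) * ∑ k ∈ Finset.range K, rho ^ k ≤
      ∑ k ∈ Finset.range K, (lam k : ℝ) := by
    rw [Finset.mul_sum]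
    exact Finset.sum_le_sum fun k _ => hlow k
  have hsum2 : (lam0:ℝ) * (rho ^ K - 1) ≤
      (∑ k ∈ Finset.range K, (lam k : ℝ)) * (rho - 1) := by
    have := mul_le_mul_of_nonneg_right hsumlow (le_of_lt hr0)
    calc (lam0:ℝ) * (rho ^ K - 1)
        = (lam0:ℝ) * ((∑ k ∈ Finset.range K, rho ^ k) * (rho - 1)) := by
          rw [geom_sum_mul]
      _ = ((lam0:ℝ) * ∑ k ∈ Finset.range K, rho ^ k) * (rho - 1) := by ring
      _ ≤ _ := this
  rw [hL, ← hK, Finset.sum_range_succ, gt_iff_lt, div_lt_iff₀ hr0]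
  nlinarith [hsum2, hceil, hlk]
end

section
/- Let ρ > 1 be real, λ₀ ≥ 1 a natural number, and define recursively λ_{k+1} = ⌈λ_k ρ⌉. Then for all k ≥ 0: ∑_{j=0}^{k+1} λ_j − λ_k − 1 < λ₀ρ + k + (λ_k − λ₀)(ρ + 1/(ρ−1)). -/
/-- For the `R*` strategy `λ_{k+1} = ⌈λ_k ρ⌉`:
`∑_{j=0}^{k+1} λ_j − λ_k − 1 < λ₀ρ + k + (λ_k − λ₀)(ρ + 1/(ρ−1))`. -/
theorem stmt9 (rho : ℝ) (hrho : 1 < rho) (lam0 : ℕ) (h0 : 1 ≤ lam0)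
    (lam : ℕ → ℤ) (hlam0 : lam 0 = lam0)
    (hrec : ∀ k, lam (k + 1) = ⌈(lam k : ℝ) * rho⌉) (k : ℕ) :
    (∑ j ∈ Finset.range (k + 2), (lam j : ℝ)) - (lam k : ℝ) - 1
      < (lam0 : ℝ) * rho + k + ((lam k : ℝ) - lam0) * (rho + 1 / (rho - 1)) := by
  have hr : (0:ℝ) < rho - 1 := by linarith
  have hpos : ∀ n, (1:ℝ) ≤ (lam n : ℝ) := by
    intro n
    induction n with
    | zero => rw [hlam0]; exact_mod_cast h0
    | succ m ih =>
      have h1 : (1:ℝ) ≤ (lam m : ℝ) * rho := by nlinarith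
      have h2 : ((lam m : ℝ) * rho) ≤ (⌈(lam m : ℝ) * rho⌉ : ℝ) := Int.le_ceil _
      rw [hrec m]
      push_cast
      linarith
  induction k with
  | zero =>
    have hceil : ((lam 1 : ℝ)) < (lam 0 : ℝ) * rho + 1 := by
      rw [hrec 0]; push_cast; exact Int.ceil_lt_add_one _
    rw [Finset.sum_range_succ, Finset.sum_range_one]
    rw [hlam0] at hceil ⊢
    push_cast
    push_cast at hceil
    nlinarith
  | succ n ih =>
    rw [Finset.sum_range_succ]
    have hceil : ((lam (n+2) : ℝ)) < (lam (n+1) : ℝ) * rho + 1 := by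
      rw [hrec (n+1)]; push_cast; exact Int.ceil_lt_add_one _
    have hd : (lam n : ℝ) * rho ≤ (lam (n+1) : ℝ) := by
      rw [hrec n]; exact Int.le_ceil _
    have hp := hpos n
    have h5 : (lam n : ℝ) ≤ ((lam (n+1) : ℝ) - lam n) * (1 / (rho - 1)) := by
      rw [mul_one_div, le_div_iff₀ hr]; nlinarith
    have hexp : ((lam (n+1) : ℝ) - lam0) * (rho + 1 / (rho - 1))
        = ((lam n : ℝ) - lam0) * (rho + 1 / (rho - 1))
          + ((lam (n+1) : ℝ) - lam n) * rho
          + ((lam (n+1) : ℝ) - lam n) * (1 / (rho - 1)) := by ring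
    push_cast
    push_cast at ih
    have hmul : ((lam (n+1) : ℝ) - lam n) * rho = (lam (n+1) : ℝ) * rho - (lam n : ℝ) * rho := by
      ring
    linarith [ih, hceil, hd, h5, hexp, hmul]
end

section
/- Let ρ > 1 be real, λ₀ ≥ 1 a natural number, and λ_{k+1} = ⌈λ_k ρ⌉. Then for all k ≥ 1: ∑_{j=0}^{k} λ_j − λ_k > (λ_k − λ₀ − k)/(ρ − 1). -/
/-- For the `R*` strategy `λ_{k+1} = ⌈λ_k ρ⌉`:
`∑_{j=0}^{k} λ_j − λ_k > (λ_k − λ₀ − k)/(ρ − 1)` for all `k ≥ 1`. -/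
theorem stmt10 (rho : ℝ) (hrho : 1 < rho) (lam0 : ℕ) (h0 : 1 ≤ lam0)
    (lam : ℕ → ℤ) (hlam0 : lam 0 = lam0)
    (hrec : ∀ k, lam (k + 1) = ⌈(lam k : ℝ) * rho⌉) (k : ℕ) (hk : 1 ≤ k) :
    (∑ j ∈ Finset.range (k + 1), (lam j : ℝ)) - (lam k : ℝ)
      > ((lam k : ℝ) - lam0 - k) / (rho - 1) := by
  have hpos : (0:ℝ) < rho - 1 := by linarith
  have key : ∀ j, ((lam (j+1) : ℝ) - lam j - 1) / (rho - 1) < lam j := by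
    intro j
    rw [div_lt_iff₀ hpos]
    have h1 : ((lam (j+1) : ℤ) : ℝ) < (lam j : ℝ) * rho + 1 := by
      rw [hrec j]
      have := Int.ceil_lt_add_one ((lam j : ℝ) * rho)
      exact_mod_cast this
    nlinarith
  have hsum : ∑ j ∈ Finset.range k, ((lam (j+1) : ℝ) - lam j - 1) / (rho - 1)
      < ∑ j ∈ Finset.range k, (lam j : ℝ) := by
    apply Finset.sum_lt_sum_of_nonempty (Finset.nonempty_range_iff.mpr (by omega))
    intro i _; exact key i
  have htel : ∑ j ∈ Finset.range k, ((lam (j+1) : ℝ) - lam j - 1)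
      = (lam k : ℝ) - lam0 - k := by
    have : ∀ j ∈ Finset.range k, ((lam (j+1) : ℝ) - lam j - 1)
        = (((lam (j+1) : ℝ) - lam j) - 1) := fun j _ => by ring
    rw [Finset.sum_congr rfl this, Finset.sum_sub_distrib,
      Finset.sum_range_sub (fun j => (lam j : ℝ)), hlam0]
    simp
  have hLHS : (∑ j ∈ Finset.range (k + 1), (lam j : ℝ)) - (lam k : ℝ)
      = ∑ j ∈ Finset.range k, (lam j : ℝ) := by
    rw [Finset.sum_range_succ]; ring
  rw [hLHS, gt_iff_lt, ← htel, Finset.sum_div]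
  exact hsum
end

section
/- Let ρ > 1, λ₀ ≥ 1, λ_0 = λ₀, λ_{k+1} = ⌈λ_k ρ⌉, and let L*(λ̂, ρ) = ∑_{k=0}^{k̂(λ̂)} λ_k − λ̂ with k̂(λ̂) = min{k : λ_k ≥ λ̂}. Then for all λ̂ ≥ λ₀: L*(λ̂, ρ) < λ₀ρ + ln(λ̂/λ₀)/ln(ρ) + (λ̂ − λ₀)(ρ + 1/(ρ−1)). -/
/-- Upper bound for the loss of the `R*` restart strategy. -/
theorem stmt12 (rho : ℝ) (hrho : 1 < rho) (lam0 : ℕ) (h0 : 1 ≤ lam0)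
    (lam : ℕ → ℤ) (hlam0 : lam 0 = lam0)
    (hrec : ∀ k, lam (k + 1) = ⌈(lam k : ℝ) * rho⌉)
    (khat : ℤ → ℕ) (hkhat : ∀ l, khat l = sInf {k | l ≤ lam k})
    (L : ℤ → ℝ) (hL : ∀ l, L l = (∑ k ∈ Finset.range (khat l + 1), (lam k : ℝ)) - l)
    (lhat : ℤ) (hlhat : (lam0 : ℤ) ≤ lhat) :
    L lhat < (lam0 : ℝ) * rho + Real.log ((lhat : ℝ) / lam0) / Real.log rho
      + ((lhat : ℝ) - lam0) * (rho + 1 / (rho - 1)) := by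
  have hρ0 : (0:ℝ) < rho := by linarith
  have hlam0R : (1:ℝ) ≤ (lam0:ℝ) := by exact_mod_cast h0
  -- every lam k is ≥ 1
  have hpos : ∀ k, (1:ℤ) ≤ lam k := by
    intro k
    induction k with
    | zero => rw [hlam0]; exact_mod_cast h0
    | succ n ih =>
      rw [hrec]
      have h1 : (1:ℝ) ≤ (lam n : ℝ) := by exact_mod_cast ih
      have h2 : (0:ℤ) < ⌈(lam n : ℝ) * rho⌉ := Int.lt_ceil.mpr (by push_cast; nlinarith)
      omega
  -- strict growth
  have hmono : ∀ k, lam k + 1 ≤ lam (k+1) := by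
    intro k
    rw [hrec]
    have h1 : (1:ℝ) ≤ (lam k : ℝ) := by exact_mod_cast hpos k
    have h2 : lam k < ⌈(lam k : ℝ) * rho⌉ := Int.lt_ceil.mpr (by nlinarith)
    omega
  have hgrow : ∀ k : ℕ, lam 0 + k ≤ lam k := by
    intro k
    induction k with
    | zero => simp
    | succ n ih => have := hmono n; push_cast; push_cast at ih; omega
  have hne : {k : ℕ | lhat ≤ lam k}.Nonempty := by
    refine ⟨(lhat - lam 0).toNat, ?_⟩
    have h1 : (0:ℤ) ≤ lhat - lam 0 := by
      rw [hlam0]; omega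
    have := hgrow (lhat - lam 0).toNat
    simp only [Set.mem_setOf_eq]
    rw [Int.toNat_of_nonneg h1] at this
    omega
  have hmem : lhat ≤ lam (khat lhat) := by
    have := Nat.sInf_mem hne
    rw [hkhat]
    exact this
  have hlt : ∀ k, k < khat lhat → lam k < lhat := by
    intro k hk
    rw [hkhat] at hk
    have := Nat.notMem_of_lt_sInf hk
    simp only [Set.mem_setOf_eq] at this
    omega
  -- lower and upper recursion bounds (real)
  have hle : ∀ k, (lam k : ℝ) * rho ≤ (lam (k+1) : ℝ) := by
    intro k
    rw [hrec]
    exact Int.le_ceil _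
  have hub : ∀ k, (lam (k+1) : ℝ) ≤ (lam k : ℝ) * rho + 1 := by
    intro k
    rw [hrec]
    exact le_of_lt (Int.ceil_lt_add_one _)
  have hlog : 0 ≤ Real.log ((lhat : ℝ) / (lam0:ℝ)) / Real.log rho := by
    apply div_nonneg
    · apply Real.log_nonneg
      rw [le_div_iff₀ (by linarith : (0:ℝ) < (lam0:ℝ))]
      have h3 : ((lam0:ℤ):ℝ) ≤ (lhat:ℝ) := by exact_mod_cast hlhat
      push_cast at h3 ⊢
      linarith
    · exact Real.log_nonneg hrho.le
  rcases Nat.eq_zero_or_eq_succ_pred (khat lhat) with h0' | h0'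
  · -- khat lhat = 0 : then lhat = lam0
    have hle0 : lhat ≤ lam 0 := by rw [← h0']; exact hmem
    have heq : lhat = (lam0 : ℤ) := by rw [hlam0] at hle0; omega
    subst heq
    rw [hL, h0']
    norm_num [Finset.sum_range_one, hlam0]
    nlinarith
  · set K := (khat lhat).pred with hKdef
    have hk : khat lhat = K + 1 := h0'
    have hKlt : lam K < lhat := hlt K (by omega)
    have hKle : (lam K : ℝ) ≤ (lhat : ℝ) - 1 := by
      have h4 : lam K ≤ lhat - 1 := by omega
      exact_mod_cast h4
    -- telescoping sum bound
    have htel : (∑ k ∈ Finset.range (K+1), (lam k : ℝ)) * (rho - 1)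
        ≤ (lam (K+1) : ℝ) - (lam 0 : ℝ) := by
      have h1 : (∑ k ∈ Finset.range (K+1), (lam k : ℝ)) * (rho - 1)
          = ∑ k ∈ Finset.range (K+1), ((lam k : ℝ) * (rho - 1)) := by
        rw [Finset.sum_mul]
      rw [h1]
      have h2 : ∑ k ∈ Finset.range (K+1), (((lam (k+1) : ℝ)) - (lam k : ℝ))
          = (lam (K+1) : ℝ) - (lam 0 : ℝ) :=
        Finset.sum_range_sub (fun k => (lam k : ℝ)) (K+1)
      rw [← h2]
      apply Finset.sum_le_sum
      intro i _
      have := hle i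
      nlinarith
    rw [hL, hk, Finset.sum_range_succ]
    set S := ∑ k ∈ Finset.range (K+1), (lam k : ℝ) with hS
    have hM : (lam (K+1) : ℝ) ≤ ((lhat:ℝ) - 1) * rho + 1 := by
      have := hub K
      nlinarith
    have hinv : (rho - 1) * (1 / (rho - 1)) = 1 :=
      mul_one_div_cancel (by linarith : rho - 1 ≠ 0)
    have hl0 : (lam 0 : ℝ) = (lam0 : ℝ) := by rw [hlam0]; push_cast; ring
    rw [hl0] at htel
    have hlhatR : (lam0:ℝ) ≤ (lhat:ℝ) := by exact_mod_cast hlhat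
    nlinarith [htel, hM, hinv, hlog, hlhatR, hlam0R, hρ0,
      mul_le_mul_of_nonneg_left hM (by linarith : (0:ℝ) ≤ rho - 1)]
end

section
/- Let ρ > 1, λ₀ ≥ 1, λ_0 = λ₀, λ_{k+1} = ⌈λ_k ρ⌉, and L*(λ̂, ρ) = ∑_{k=0}^{k̂(λ̂)} λ_k − λ̂ with k̂(λ̂) = min{k : λ_k ≥ λ̂}. Then for all λ̂ ≥ λ₀: L*(λ̂, ρ) > (λ̂ − λ₀ − ln(λ̂/λ₀)/ln(ρ) − 1)/(ρ − 1). -/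
/-- Lower bound for the loss of the `R*` restart strategy. -/
theorem stmt13 (rho : ℝ) (hrho : 1 < rho) (lam0 : ℕ) (h0 : 1 ≤ lam0)
    (lam : ℕ → ℤ) (hlam0 : lam 0 = lam0)
    (hrec : ∀ k, lam (k + 1) = ⌈(lam k : ℝ) * rho⌉)
    (khat : ℤ → ℕ) (hkhat : ∀ l, khat l = sInf {k | l ≤ lam k})
    (L : ℤ → ℝ) (hL : ∀ l, L l = (∑ k ∈ Finset.range (khat l + 1), (lam k : ℝ)) - l)
    (lhat : ℤ) (hlhat : (lam0 : ℤ) ≤ lhat) :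
    L lhat > ((lhat : ℝ) - lam0 - Real.log ((lhat : ℝ) / lam0) / Real.log rho - 1)
      / (rho - 1) := by
  have hρ1 : (0:ℝ) < rho - 1 := by linarith
  have hρ0 : (0:ℝ) < rho := by linarith
  have h0R : (1:ℝ) ≤ (lam0 : ℝ) := by exact_mod_cast h0
  have hpos : ∀ k, 1 ≤ lam k := by
    intro k
    induction k with
    | zero => rw [hlam0]; exact_mod_cast h0
    | succ n ih =>
      rw [hrec]
      have h1 : (1:ℝ) ≤ (lam n : ℝ) := by exact_mod_cast ih
      have : (1:ℝ) ≤ (lam n : ℝ) * rho := by nlinarith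
      calc (1:ℤ) = ⌈(1:ℝ)⌉ := by simp
        _ ≤ _ := Int.ceil_le_ceil this
  have hstep : ∀ k, lam k + 1 ≤ lam (k+1) := by
    intro k
    rw [hrec, Int.add_one_le_iff, Int.lt_ceil]
    have h1 : (1:ℝ) ≤ (lam k : ℝ) := by exact_mod_cast hpos k
    nlinarith
  have hgrow : ∀ k, (lam0 : ℤ) + k ≤ lam k := by
    intro k
    induction k with
    | zero => simp [hlam0]
    | succ n ih =>
      have := hstep n
      push_cast at ih ⊢
      linarith
  have hne : ∃ k, k ∈ {k | lhat ≤ lam k} := by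
    refine ⟨(lhat - lam0).toNat, ?_⟩
    have h1 := hgrow (lhat - lam0).toNat
    have h2 : (lhat - lam0) ≤ ((lhat - lam0).toNat : ℤ) := Int.self_le_toNat _
    simp only [Set.mem_setOf_eq]
    linarith
  set K := khat lhat with hKdef
  have hKmem : lhat ≤ lam K := by
    have := Nat.sInf_mem hne
    rw [hKdef, hkhat]
    exact this
  have hmin : ∀ k, k < K → lam k < lhat := by
    intro k hk
    by_contra hc
    push_neg at hc
    have : sInf {k | lhat ≤ lam k} ≤ k := Nat.sInf_le hc
    rw [hKdef, hkhat] at hk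
    omega
  -- telescoping lower bound on the partial sum
  have hceil : ∀ k, (lam (k+1) : ℝ) ≤ (lam k : ℝ) * rho + 1 := by
    intro k
    rw [hrec]
    have := Int.ceil_lt_add_one ((lam k : ℝ) * rho)
    linarith
  have htel : ∑ k ∈ Finset.range K, ((lam (k+1) : ℝ) - lam k - 1)
      = (lam K : ℝ) - lam0 - K := by
    have h1 : ∑ k ∈ Finset.range K, ((lam (k+1) : ℝ) - lam k)
        = (lam K : ℝ) - (lam 0 : ℝ) := Finset.sum_range_sub (fun k => (lam k : ℝ)) K
    have : ∑ k ∈ Finset.range K, ((lam (k+1) : ℝ) - lam k - 1)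
        = (∑ k ∈ Finset.range K, ((lam (k+1) : ℝ) - lam k)) - K := by
      rw [Finset.sum_sub_distrib]
      simp
    rw [this, h1, hlam0]
    push_cast
    ring
  have hSum : (lam K : ℝ) - lam0 - K ≤ (rho - 1) * ∑ k ∈ Finset.range K, (lam k : ℝ) := by
    rw [← htel, Finset.mul_sum]
    apply Finset.sum_le_sum
    intro k _
    have := hceil k
    nlinarith
  have hLge : (∑ k ∈ Finset.range K, (lam k : ℝ)) ≤ L lhat := by
    rw [hL, ← hKdef, Finset.sum_range_succ]
    have : (lhat : ℝ) ≤ (lam K : ℝ) := by exact_mod_cast hKmem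
    linarith
  have hlhatR : (lam0 : ℝ) ≤ (lhat : ℝ) := by exact_mod_cast hlhat
  have hKbound : (K : ℝ) < Real.log ((lhat : ℝ) / lam0) / Real.log rho + 1 := by
    have hlogρ : 0 < Real.log rho := Real.log_pos hrho
    rcases Nat.eq_zero_or_pos K with hK0 | hKpos
    · rw [hK0]
      push_cast
      have h1 : 0 ≤ Real.log ((lhat : ℝ) / lam0) := by
        apply Real.log_nonneg
        rw [le_div_iff₀ (by linarith)]
        linarith
      positivity
    · obtain ⟨m, hm⟩ : ∃ m, K = m + 1 := ⟨K - 1, by omega⟩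
      have hgeom : ∀ k, (lam0 : ℝ) * rho ^ k ≤ (lam k : ℝ) := by
        intro k
        induction k with
        | zero => simp [hlam0]
        | succ n ih =>
          have h1 : (lam n : ℝ) * rho ≤ (lam (n+1) : ℝ) := by
            rw [hrec]; exact Int.le_ceil _
          calc (lam0 : ℝ) * rho ^ (n+1) = ((lam0 : ℝ) * rho ^ n) * rho := by ring
            _ ≤ (lam n : ℝ) * rho := by
                exact mul_le_mul_of_nonneg_right ih (le_of_lt hρ0)
            _ ≤ _ := h1
      have hmlt : (lam m : ℝ) < (lhat : ℝ) := by
        exact_mod_cast hmin m (by omega)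
      have hchain : (lam0 : ℝ) * rho ^ m < (lhat : ℝ) := lt_of_le_of_lt (hgeom m) hmlt
      have hlog : Real.log ((lam0 : ℝ) * rho ^ m) < Real.log (lhat : ℝ) := by
        apply Real.log_lt_log (by positivity) hchain
      rw [Real.log_mul (by positivity) (by positivity), Real.log_pow] at hlog
      have hlog0 : 0 ≤ Real.log (lam0 : ℝ) := Real.log_nonneg h0R
      have hdiv : Real.log ((lhat : ℝ) / lam0) = Real.log (lhat : ℝ) - Real.log (lam0 : ℝ) :=
        Real.log_div (by linarith) (by linarith)
      rw [hm, hdiv]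
      push_cast
      have hm2 : (m : ℝ) < (Real.log (lhat : ℝ) - Real.log (lam0 : ℝ)) / Real.log rho := by
        rw [lt_div_iff₀ hlogρ]
        nlinarith
      linarith
  have hfinal : ((lhat : ℝ) - lam0 - Real.log ((lhat : ℝ) / lam0) / Real.log rho - 1)
      / (rho - 1) < ((lhat : ℝ) - lam0 - K) / (rho - 1) := by
    exact (div_lt_div_iff_of_pos_right hρ1).mpr (by linarith)
  have h2 : ((lhat : ℝ) - lam0 - K) / (rho - 1) ≤ ∑ k ∈ Finset.range K, (lam k : ℝ) := by
    rw [div_le_iff₀ hρ1]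
    have : (lhat : ℝ) ≤ (lam K : ℝ) := by exact_mod_cast hKmem
    nlinarith
  linarith
end

section
/- Let α ≥ 1 be real, λ₀ ≥ 1 a natural number, λ_k = ⌈λ₀(k+1)^α⌉, and L^#(λ̂, α) = ∑_{k=0}^{k̂(λ̂)} λ_k − λ̂ with k̂(λ̂) = min{k : λ_k ≥ λ̂}. Then for all λ̂ > λ₀: L^#(λ̂, α) > (λ₀/(α+1)) · (((λ̂−1)/λ₀)^{1/α} − 1)^{α+1}. -/
open Real Finset

lemma step_ineq' (p : ℝ) (hp : 1 ≤ p) (k : ℕ) :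
    ((k:ℝ)+1)^p - (k:ℝ)^p ≤ p * ((k:ℝ)+1)^(p-1) := by
  set s : ℝ := (k:ℝ)+1 with hs
  have hs0 : 0 < s := by positivity
  have hs1 : (1:ℝ) ≤ s := by
    have : (0:ℝ) ≤ (k:ℝ) := Nat.cast_nonneg k
    simp only [hs]; linarith
  have hb : (-1:ℝ) ≤ -1/s := by
    rw [neg_div]
    have : 1/s ≤ 1 := by rw [div_le_one hs0]; exact hs1
    linarith
  have h := one_add_mul_self_le_rpow_one_add hb hp
  have h1 : (1:ℝ) + (-1/s) = (k:ℝ)/s := by field_simp [hs]; linarith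
  rw [h1] at h
  have hk0 : (0:ℝ) ≤ k := Nat.cast_nonneg k
  have hdiv : ((k:ℝ)/s)^p = (k:ℝ)^p / s^p := Real.div_rpow hk0 hs0.le p
  rw [hdiv] at h
  have hsp : (0:ℝ) < s^p := Real.rpow_pos_of_pos hs0 p
  have h2 : (1 + p * (-1/s)) * s^p ≤ (k:ℝ)^p := by
    have := mul_le_mul_of_nonneg_right h hsp.le
    rwa [div_mul_cancel₀ _ (ne_of_gt hsp)] at this
  have h3 : s^(p-1) = s^p / s := by
    rw [Real.rpow_sub hs0, Real.rpow_one]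
  rw [h3]
  have h4 : (1 + p * (-1/s)) * s^p = s^p - p * (s^p / s) := by
    field_simp
    ring
  linarith [h4 ▸ h2]

lemma sum_rpow_gt' (p : ℝ) (hp : 2 ≤ p) (K : ℕ) (hK : 1 ≤ K) :
    (K:ℝ)^p / p < ∑ k ∈ Finset.range K, ((k:ℝ)+1)^(p-1) := by
  have hp0 : (0:ℝ) < p := by linarith
  rw [div_lt_iff₀ hp0]
  have htel : ∑ k ∈ Finset.range K, (((k:ℝ)+1)^p - (k:ℝ)^p) = (K:ℝ)^p := by
    have h := Finset.sum_range_sub (fun i => ((i:ℝ))^p) K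
    simp only [Nat.cast_zero, Real.zero_rpow (by linarith : p ≠ 0), sub_zero] at h
    rw [← h]
    apply Finset.sum_congr rfl
    intro i _
    push_cast
    ring
  calc (K:ℝ)^p = ∑ k ∈ Finset.range K, (((k:ℝ)+1)^p - (k:ℝ)^p) := htel.symm
    _ < ∑ k ∈ Finset.range K, p * ((k:ℝ)+1)^(p-1) := by
        apply Finset.sum_lt_sum
        · intro i _; exact step_ineq' p (by linarith) i
        · refine ⟨0, Finset.mem_range.2 (by omega), ?_⟩
          simp only [Nat.cast_zero, zero_add, Real.one_rpow,
            Real.zero_rpow (by linarith : p ≠ 0), mul_one]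
          linarith
    _ = (∑ k ∈ Finset.range K, ((k:ℝ)+1)^(p-1)) * p := by
        rw [Finset.sum_mul]
        exact Finset.sum_congr rfl (fun i _ => mul_comm _ _)

/-- Lower bound for the loss of the power-law restart strategy `R^#`. -/
theorem stmt17 (alpha : ℝ) (halpha : 1 ≤ alpha) (lam0 : ℕ) (h0 : 1 ≤ lam0)
    (lam : ℕ → ℤ) (hlam : ∀ k, lam k = ⌈(lam0 : ℝ) * ((k : ℝ) + 1) ^ alpha⌉)
    (khat : ℤ → ℕ) (hkhat : ∀ l, khat l = sInf {k | l ≤ lam k})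
    (L : ℤ → ℝ) (hL : ∀ l, L l = (∑ k ∈ Finset.range (khat l + 1), (lam k : ℝ)) - l)
    (lhat : ℤ) (hlhat : (lam0 : ℤ) < lhat) :
    L lhat > ((lam0 : ℝ) / (alpha + 1))
      * ((((lhat : ℝ) - 1) / lam0) ^ (1 / alpha) - 1) ^ (alpha + 1) := by
  have hl0R : (1:ℝ) ≤ (lam0:ℝ) := by exact_mod_cast h0
  have hl0pos : (0:ℝ) < (lam0:ℝ) := by linarith
  have ha0 : (0:ℝ) < alpha := by linarith
  have hp2 : (2:ℝ) ≤ alpha + 1 := by linarith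
  have hp0 : (0:ℝ) < alpha + 1 := by linarith
  -- nonemptiness of the set
  have hmem_toNat : lhat ≤ lam lhat.toNat := by
    rw [hlam]
    have h2 : (lhat:ℝ) ≤ (lhat.toNat:ℝ)+1 := by
      have h := Int.self_le_toNat lhat
      have : (lhat:ℝ) ≤ ((lhat.toNat : ℤ):ℝ) := by exact_mod_cast h
      push_cast at this ⊢
      linarith
    have hx1 : (1:ℝ) ≤ (lhat.toNat:ℝ)+1 := by
      have : (0:ℝ) ≤ (lhat.toNat:ℝ) := Nat.cast_nonneg _
      linarith
    have h3 : ((lhat.toNat:ℝ)+1) ≤ ((lhat.toNat:ℝ)+1)^alpha := by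
      nth_rewrite 1 [← Real.rpow_one ((lhat.toNat:ℝ)+1)]
      exact Real.rpow_le_rpow_of_exponent_le hx1 halpha
    have h4 : ((lhat.toNat:ℝ)+1)^alpha ≤ (lam0:ℝ) * ((lhat.toNat:ℝ)+1)^alpha := by
      have := Real.rpow_pos_of_pos (by linarith : (0:ℝ) < (lhat.toNat:ℝ)+1) alpha
      nlinarith
    have h5 : (lhat:ℝ) ≤ (lam0:ℝ) * ((lhat.toNat:ℝ)+1)^alpha := by linarith
    have := h5.trans (Int.le_ceil _)
    exact_mod_cast this
  have hne : {k | lhat ≤ lam k}.Nonempty := ⟨_, hmem_toNat⟩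
  have hKmem : lhat ≤ lam (khat lhat) := by
    have := Nat.sInf_mem hne
    rw [hkhat]; exact this
  set K := khat lhat with hKdef
  have hK1 : 1 ≤ K := by
    rcases Nat.eq_zero_or_pos K with h | h
    · exfalso
      rw [h] at hKmem
      rw [hlam] at hKmem
      simp only [Nat.cast_zero, zero_add, Real.one_rpow, mul_one, Int.ceil_natCast] at hKmem
      omega
    · exact h
  -- upper bound : lhat - 1 < lam0 * (K+1)^alpha
  have hub : (lhat:ℝ) - 1 < (lam0:ℝ) * ((K:ℝ)+1)^alpha := by
    have h1 : (lhat:ℝ) ≤ ((lam K : ℤ):ℝ) := by exact_mod_cast hKmem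
    rw [hlam] at h1
    have h2 := Int.ceil_lt_add_one ((lam0:ℝ) * ((K:ℝ)+1)^alpha)
    push_cast at h1
    linarith
  -- the base b
  set b : ℝ := (((lhat:ℝ) - 1) / lam0) ^ (1/alpha) - 1 with hbdef
  have hratio1 : (1:ℝ) ≤ ((lhat:ℝ) - 1) / lam0 := by
    rw [le_div_iff₀ hl0pos]
    have : (lam0:ℤ) + 1 ≤ lhat := hlhat
    have : ((lam0:ℤ):ℝ) + 1 ≤ (lhat:ℝ) := by exact_mod_cast this
    push_cast at this
    linarith
  have hb0 : 0 ≤ b := by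
    have : (1:ℝ) ≤ (((lhat:ℝ) - 1) / lam0) ^ (1/alpha) := by
      calc (1:ℝ) = (1:ℝ)^(1/alpha) := (Real.one_rpow _).symm
        _ ≤ (((lhat:ℝ) - 1) / lam0) ^ (1/alpha) :=
          Real.rpow_le_rpow zero_le_one hratio1 (by positivity)
    simp only [hbdef]; linarith
  have hbK : b ≤ (K:ℝ) := by
    have hKpos : (0:ℝ) < (K:ℝ)+1 := by positivity
    have h1 : ((lhat:ℝ) - 1) / lam0 ≤ ((K:ℝ)+1)^alpha := by
      rw [div_le_iff₀ hl0pos]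
      linarith [hub]
    have h2 : (((lhat:ℝ) - 1) / lam0) ^ (1/alpha) ≤ (((K:ℝ)+1)^alpha) ^ (1/alpha) :=
      Real.rpow_le_rpow (by linarith) h1 (by positivity)
    have h3 : (((K:ℝ)+1)^alpha) ^ (1/alpha) = (K:ℝ)+1 := by
      rw [← Real.rpow_mul hKpos.le, mul_one_div_cancel (ne_of_gt ha0), Real.rpow_one]
    rw [h3] at h2
    simp only [hbdef]
    linarith
  -- main chain
  have hsum1 : ∑ k ∈ Finset.range K, (lam0:ℝ) * ((k:ℝ)+1)^alpha
      ≤ ∑ k ∈ Finset.range K, ((lam k : ℤ):ℝ) := by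
    apply Finset.sum_le_sum
    intro i _
    rw [hlam]
    exact Int.le_ceil _
  have hkey : (lam0:ℝ) * ((K:ℝ)^(alpha+1) / (alpha+1))
      < ∑ k ∈ Finset.range K, (lam0:ℝ) * ((k:ℝ)+1)^alpha := by
    rw [← Finset.mul_sum]
    apply mul_lt_mul_of_pos_left _ hl0pos
    have := sum_rpow_gt' (alpha+1) hp2 K hK1
    simpa using this
  have hbpow : b^(alpha+1) ≤ (K:ℝ)^(alpha+1) :=
    Real.rpow_le_rpow hb0 hbK hp0.le
  have hLval : L lhat = (∑ k ∈ Finset.range K, ((lam k : ℤ):ℝ)) + (((lam K : ℤ):ℝ) - (lhat:ℝ)) := by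
    rw [hL, ← hKdef, Finset.sum_range_succ]
    ring
  have hLK : ((lhat:ℝ)) ≤ ((lam K : ℤ):ℝ) := by exact_mod_cast hKmem
  rw [hLval]
  have hfin : ((lam0:ℝ) / (alpha+1)) * b^(alpha+1) ≤ (lam0:ℝ) * ((K:ℝ)^(alpha+1)/(alpha+1)) := by
    rw [div_mul_eq_mul_div, mul_div_assoc]
    gcongr
  linarith [hsum1, hkey, hfin, hLK]
end

section
/- Let α ≥ 1 be real, λ₀ ≥ 1 a natural number, λ_k = ⌈λ₀(k+1)^α⌉, and L^#(λ̂, α) the loss function. Then for all λ̂ ≥ λ₀: L^#(λ̂, α) ≤ (λ₀/(α+1)) · (((λ̂−1)/λ₀)^{1/α} + 2)^{α+1} + ((λ̂−1)/λ₀)^{1/α} − λ₀/(α+1). -/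
open Real

/-- key step: `(α+1) x^α ≤ (x+1)^(α+1) − x^(α+1)` for `x ≥ 1`. -/
lemma step_ineq (alpha : ℝ) (halpha : 1 ≤ alpha) {x : ℝ} (hx : 1 ≤ x) :
    (alpha + 1) * x ^ alpha ≤ (x + 1) ^ (alpha + 1) - x ^ (alpha + 1) := by
  have hx0 : (0:ℝ) < x := lt_of_lt_of_le one_pos hx
  have hb : (-1:ℝ) ≤ 1 / x := by
    have : (0:ℝ) ≤ 1 / x := by positivity
    linarith
  have hp : (1:ℝ) ≤ alpha + 1 := by linarith
  have hbern := one_add_mul_self_le_rpow_one_add hb hp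
  have hfac : x + 1 = x * (1 + 1/x) := by field_simp
  have h1 : (x + 1) ^ (alpha + 1) = x ^ (alpha + 1) * (1 + 1/x) ^ (alpha + 1) := by
    rw [hfac, Real.mul_rpow hx0.le (by positivity)]
  have h2 : x ^ (alpha + 1) * (1 + (alpha + 1) * (1/x)) ≤ x ^ (alpha+1) * (1 + 1/x) ^ (alpha + 1) :=
    mul_le_mul_of_nonneg_left hbern (by positivity)
  have h3 : x ^ (alpha + 1) = x ^ alpha * x := Real.rpow_add_one hx0.ne' alpha
  calc (alpha + 1) * x ^ alpha
      = x ^ (alpha + 1) * (1 + (alpha + 1) * (1/x)) - x ^ (alpha + 1) := by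
        rw [h3]; field_simp; ring
    _ ≤ (x + 1) ^ (alpha + 1) - x ^ (alpha + 1) := by rw [h1]; linarith

lemma sum_pow_le (alpha : ℝ) (halpha : 1 ≤ alpha) (K : ℕ) :
    ∑ k ∈ Finset.range (K + 1), ((k : ℝ) + 1) ^ alpha
      ≤ (((K : ℝ) + 2) ^ (alpha + 1) - 1) / (alpha + 1) := by
  have hpos : (0:ℝ) < alpha + 1 := by linarith
  induction K with
  | zero =>
      rw [Finset.sum_range_one]
      have h := step_ineq alpha halpha (le_refl (1:ℝ))
      rw [Real.one_rpow, Real.one_rpow, mul_one] at h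
      have he : ((0:ℕ):ℝ) + 1 = 1 := by norm_num
      have he2 : ((0:ℕ):ℝ) + 2 = 1 + 1 := by norm_num
      rw [he, he2, Real.one_rpow, le_div_iff₀ hpos]
      linarith
  | succ n ih =>
      rw [Finset.sum_range_succ]
      have hx : (1:ℝ) ≤ (n:ℝ) + 1 + 1 := by
        have : (0:ℝ) ≤ (n:ℝ) := Nat.cast_nonneg n
        linarith
      have hstep := step_ineq alpha halpha hx
      have key : ((n:ℝ) + 1 + 1) ^ alpha
          ≤ ((((n:ℝ)+1) + 2) ^ (alpha+1) - ((n:ℝ) + 2) ^ (alpha+1)) / (alpha + 1) := by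
        rw [le_div_iff₀ hpos]
        have : (n:ℝ) + 1 + 1 + 1 = (n:ℝ) + 1 + 2 := by ring
        rw [this] at hstep
        have h2 : (n:ℝ) + 1 + 1 = (n:ℝ) + 2 := by ring
        rw [h2] at hstep ⊢
        linarith
      push_cast
      calc (∑ k ∈ Finset.range (n + 1), ((k : ℝ) + 1) ^ alpha) + ((n:ℝ) + 1 + 1) ^ alpha
          ≤ (((n : ℝ) + 2) ^ (alpha + 1) - 1) / (alpha + 1)
            + ((((n:ℝ)+1) + 2) ^ (alpha+1) - ((n:ℝ) + 2) ^ (alpha+1)) / (alpha + 1) :=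
            add_le_add ih key
        _ = ((((n:ℝ) + 1) + 2) ^ (alpha + 1) - 1) / (alpha + 1) := by ring

/-- Upper bound for the loss of the power-law restart strategy `R^#`. -/
theorem stmt18 (alpha : ℝ) (halpha : 1 ≤ alpha) (lam0 : ℕ) (h0 : 1 ≤ lam0)
    (lam : ℕ → ℤ) (hlam : ∀ k, lam k = ⌈(lam0 : ℝ) * ((k : ℝ) + 1) ^ alpha⌉)
    (khat : ℤ → ℕ) (hkhat : ∀ l, khat l = sInf {k | l ≤ lam k})
    (L : ℤ → ℝ) (hL : ∀ l, L l = (∑ k ∈ Finset.range (khat l + 1), (lam k : ℝ)) - l)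
    (lhat : ℤ) (hlhat : (lam0 : ℤ) ≤ lhat) :
    L lhat ≤ ((lam0 : ℝ) / (alpha + 1))
        * ((((lhat : ℝ) - 1) / lam0) ^ (1 / alpha) + 2) ^ (alpha + 1)
      + (((lhat : ℝ) - 1) / lam0) ^ (1 / alpha) - (lam0 : ℝ) / (alpha + 1) := by
  have hα0 : (0:ℝ) < alpha := by linarith
  have hl0R : (1:ℝ) ≤ (lam0 : ℝ) := by exact_mod_cast h0
  have hl0pos : (0:ℝ) < (lam0:ℝ) := by linarith
  have hlhat1 : (1:ℤ) ≤ lhat := le_trans (by exact_mod_cast h0) hlhat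
  have hlhatR : (1:ℝ) ≤ (lhat:ℝ) := by exact_mod_cast hlhat1
  set t : ℝ := (((lhat : ℝ) - 1) / lam0) ^ (1 / alpha) with ht
  have ht0 : 0 ≤ t := Real.rpow_nonneg (div_nonneg (by linarith) (by positivity)) _
  -- the set is nonempty
  set S : Set ℕ := {k | lhat ≤ lam k} with hS
  have hne : S.Nonempty := by
    refine ⟨lhat.toNat, ?_⟩
    have hk : (lhat : ℝ) ≤ (lam0 : ℝ) * ((lhat.toNat : ℝ) + 1) ^ alpha := by
      have h1 : (lhat:ℝ) ≤ (lhat.toNat : ℝ) + 1 := by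
        have := Int.self_le_toNat lhat
        have : (lhat:ℝ) ≤ (lhat.toNat : ℝ) := by exact_mod_cast this
        linarith
      have hb : (1:ℝ) ≤ (lhat.toNat : ℝ) + 1 := by
        have : (0:ℝ) ≤ (lhat.toNat : ℝ) := Nat.cast_nonneg _
        linarith
      have h2 : ((lhat.toNat : ℝ) + 1) ^ (1:ℝ) ≤ ((lhat.toNat : ℝ) + 1) ^ alpha :=
        Real.rpow_le_rpow_of_exponent_le hb halpha
      rw [Real.rpow_one] at h2
      calc (lhat:ℝ) ≤ (lhat.toNat : ℝ) + 1 := h1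
        _ ≤ ((lhat.toNat : ℝ) + 1) ^ alpha := h2
        _ ≤ (lam0 : ℝ) * ((lhat.toNat : ℝ) + 1) ^ alpha := by
            nlinarith [Real.rpow_nonneg (show (0:ℝ) ≤ (lhat.toNat:ℝ)+1 by positivity) alpha]
    show lhat ≤ lam lhat.toNat
    rw [hlam]
    have := hk.trans (Int.le_ceil _)
    exact_mod_cast this
  -- properties of khat
  set K : ℕ := khat lhat with hK
  have hKmem : lhat ≤ lam K := by
    have : K ∈ S := by rw [hK, hkhat]; exact Nat.sInf_mem hne
    exact this
  have hKlt : ∀ k < K, lam k < lhat := by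
    intro k hk
    by_contra h
    push_neg at h
    have : K ≤ k := by
      rw [hK, hkhat]; exact Nat.sInf_le h
    omega
  -- bound K ≤ t
  have hKt : (K : ℝ) ≤ t := by
    rcases Nat.eq_zero_or_pos K with h | h
    · rw [h]; exact_mod_cast ht0
    · have hprev := hKlt (K - 1) (by omega)
      rw [hlam] at hprev
      have hcast : ((K - 1 : ℕ) : ℝ) + 1 = (K : ℝ) := by
        have : (K - 1 : ℕ) + 1 = K := by omega
        exact_mod_cast congrArg (Nat.cast : ℕ → ℝ) this
      have hceil : ⌈(lam0 : ℝ) * (((K - 1 : ℕ) : ℝ) + 1) ^ alpha⌉ ≤ lhat - 1 := by omega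
      have hreal : (lam0 : ℝ) * ((K : ℝ)) ^ alpha ≤ (lhat : ℝ) - 1 := by
        have h1 := (Int.le_ceil ((lam0 : ℝ) * (((K - 1 : ℕ) : ℝ) + 1) ^ alpha)).trans
          (by exact_mod_cast hceil : ((⌈(lam0 : ℝ) * (((K - 1 : ℕ) : ℝ) + 1) ^ alpha⌉ : ℝ)) ≤ (lhat : ℝ) - 1)
        rwa [hcast] at h1
      have hKa : ((K : ℝ)) ^ alpha ≤ ((lhat : ℝ) - 1) / lam0 := by
        rw [le_div_iff₀ hl0pos]
        nlinarith
      have hmono : (((K : ℝ)) ^ alpha) ^ (1 / alpha) ≤ (((lhat : ℝ) - 1) / lam0) ^ (1 / alpha) :=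
        Real.rpow_le_rpow (Real.rpow_nonneg (Nat.cast_nonneg K) _) hKa (by positivity)
      have hid : (((K : ℝ)) ^ alpha) ^ (1 / alpha) = (K : ℝ) := by
        rw [one_div]
        exact Real.rpow_rpow_inv (Nat.cast_nonneg K) (ne_of_gt hα0)
      rw [hid] at hmono
      exact hmono
  -- bound the sum
  have hsum : (∑ k ∈ Finset.range (K + 1), (lam k : ℝ))
      ≤ (lam0 : ℝ) * ((((K : ℝ) + 2) ^ (alpha + 1) - 1) / (alpha + 1)) + ((K : ℝ) + 1) := by
    have hterm : ∀ k ∈ Finset.range (K + 1),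
        (lam k : ℝ) ≤ (lam0 : ℝ) * ((k : ℝ) + 1) ^ alpha + 1 := by
      intro k _
      rw [hlam]
      exact le_of_lt (by exact_mod_cast Int.ceil_lt_add_one ((lam0 : ℝ) * ((k : ℝ) + 1) ^ alpha))
    calc (∑ k ∈ Finset.range (K + 1), (lam k : ℝ))
        ≤ ∑ k ∈ Finset.range (K + 1), ((lam0 : ℝ) * ((k : ℝ) + 1) ^ alpha + 1) :=
          Finset.sum_le_sum hterm
      _ = (lam0 : ℝ) * (∑ k ∈ Finset.range (K + 1), ((k : ℝ) + 1) ^ alpha) + ((K : ℝ) + 1) := by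
          rw [Finset.sum_add_distrib, Finset.mul_sum]
          simp
      _ ≤ (lam0 : ℝ) * ((((K : ℝ) + 2) ^ (alpha + 1) - 1) / (alpha + 1)) + ((K : ℝ) + 1) := by
          have := sum_pow_le alpha halpha K
          nlinarith
  -- monotonicity in K ≤ t
  have hpow : ((K : ℝ) + 2) ^ (alpha + 1) ≤ (t + 2) ^ (alpha + 1) :=
    Real.rpow_le_rpow (by positivity) (by linarith) (by linarith)
  have hα1 : (0:ℝ) < alpha + 1 := by linarith
  rw [hL]
  rw [← hK]
  have hlast : (K : ℝ) + 1 - (lhat : ℝ) ≤ t := by linarith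
  calc (∑ k ∈ Finset.range (K + 1), (lam k : ℝ)) - (lhat : ℝ)
      ≤ (lam0 : ℝ) * ((((K : ℝ) + 2) ^ (alpha + 1) - 1) / (alpha + 1)) + ((K : ℝ) + 1) - (lhat : ℝ) := by
        linarith
    _ ≤ (lam0 : ℝ) * (((t + 2) ^ (alpha + 1) - 1) / (alpha + 1)) + t := by
        have h1 : (lam0 : ℝ) * ((((K : ℝ) + 2) ^ (alpha + 1) - 1) / (alpha + 1))
            ≤ (lam0 : ℝ) * (((t + 2) ^ (alpha + 1) - 1) / (alpha + 1)) := by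
          gcongr
        linarith
    _ = ((lam0 : ℝ) / (alpha + 1)) * ((t + 2) ^ (alpha + 1)) + t - (lam0 : ℝ) / (alpha + 1) := by
        ring
end

section
/- For the power-law restart strategy, the relative loss is strictly unbounded: for fixed real α ≥ 1 and natural λ₀ ≥ 1, the lower bound ℓ^#_low(λ̂) = (λ₀/((α+1)λ̂)) · (((λ̂−1)/λ₀)^{1/α} − 1)^{α+1} of the relative loss L^#(λ̂,α)/λ̂ tends to infinity as λ̂ → ∞. -/
open Filter

/-- The lower bound of the relative loss of the power-law restart strategy `R^#`
tends to infinity as `λ̂ → ∞`. -/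
theorem stmt19 (alpha : ℝ) (halpha : 1 ≤ alpha) (lam0 : ℕ) (h0 : 1 ≤ lam0) :
    Tendsto (fun lhat : ℝ =>
        ((lam0 : ℝ) / ((alpha + 1) * lhat))
          * (((lhat - 1) / lam0) ^ (1 / alpha) - 1) ^ (alpha + 1))
      atTop atTop := by
  have hα0 : (0:ℝ) < alpha := lt_of_lt_of_le one_pos halpha
  have hl0 : (0:ℝ) < (lam0:ℝ) := by exact_mod_cast h0
  have hP : (0:ℝ) < (2:ℝ) ^ (alpha + 1) := Real.rpow_pos_of_pos (by norm_num) _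
  set T : ℝ → ℝ := fun x => ((x - 1) / (lam0:ℝ)) ^ (1 / alpha) with hT
  have hTtop : Tendsto T atTop atTop := by
    apply (tendsto_rpow_atTop (by positivity : (0:ℝ) < 1 / alpha)).comp
    apply Tendsto.atTop_div_const hl0
    exact tendsto_atTop_add_const_right atTop (-1) tendsto_id
  have hc : (0:ℝ) < ((alpha + 1) * (2:ℝ) ^ (alpha + 1) * 2)⁻¹ := by positivity
  refine tendsto_atTop_mono' atTop ?_
    (hTtop.const_mul_atTop hc)
  filter_upwards [eventually_ge_atTop (2:ℝ), hTtop.eventually_ge_atTop 2] with x hx2 ht2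
  set t : ℝ := T x with htdef
  have hs0 : (0:ℝ) ≤ (x - 1) / (lam0:ℝ) := by
    apply div_nonneg _ hl0.le; linarith
  have h1 : t ^ alpha = (x - 1) / (lam0:ℝ) := by
    rw [htdef, hT]
    simp only [one_div]
    exact Real.rpow_inv_rpow hs0 (ne_of_gt hα0)
  have ht0 : (0:ℝ) < t := by linarith
  have h4 : t ^ (alpha + 1) = ((x - 1) / (lam0:ℝ)) * t := by
    rw [Real.rpow_add ht0, Real.rpow_one, h1]
  have h2 : (t / 2) ^ (alpha + 1) ≤ (t - 1) ^ (alpha + 1) :=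
    Real.rpow_le_rpow (by linarith) (by linarith) (by linarith)
  have h3 : (t / 2) ^ (alpha + 1) = t ^ (alpha + 1) / (2:ℝ) ^ (alpha + 1) :=
    Real.div_rpow ht0.le (by norm_num) _
  have hA : (0:ℝ) < (lam0:ℝ) / ((alpha + 1) * x) := by
    apply div_pos hl0; positivity
  calc ((alpha + 1) * (2:ℝ) ^ (alpha + 1) * 2)⁻¹ * t
      ≤ ((lam0 : ℝ) / ((alpha + 1) * x)) * ((t / 2) ^ (alpha + 1)) := by
        rw [h3, h4]
        rw [inv_mul_le_iff₀ (by positivity)]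
        have hxpos : (0:ℝ) < x := by linarith
        have hrhs : (alpha + 1) * (2:ℝ)^(alpha+1) * 2 *
            ((lam0:ℝ) / ((alpha + 1) * x) * ((x - 1) / (lam0:ℝ) * t / (2:ℝ)^(alpha+1)))
            = 2 * (x - 1) * t / x := by
          field_simp
        rw [hrhs, le_div_iff₀ hxpos]
        nlinarith [ht0.le]
      _ ≤ ((lam0 : ℝ) / ((alpha + 1) * x)) * ((t - 1) ^ (alpha + 1)) :=
        mul_le_mul_of_nonneg_left h2 hA.le
end
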